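/- Let a ∈ L¹_loc([0,∞); ℂ) and let P, P_* be the solutions of the Krein system with coefficient a. Then for every r > 0 and every λ ∈ ℂ with Im(λ) ≠ 0 one has ∫₀^r conj(P(s, 0)) P(s, λ) ds ≠ 0; that is, the function λ ↦ K_r(0, λ) = ∫₀^r conj(P(s,0)) P(s,λ) ds has no zeros outside the real line. -/

import Mathlib

/-!
Integrating the Krein system by parts gives the Christoffel–Darboux identity
`conj P(r,w) P(r,z) - conj P_*(r,w) P_*(r,z) = i (z - conj w) ∫₀^r conj P(s,w) P(s,z) ds`.
If `K_r(0,λ) = 0`, the identity at `(w,z) = (0,λ)` gives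
`conj P(r,0) P(r,λ) = conj P_*(r,0) P_*(r,λ)`, and at `(0,0)` it gives `|P(r,0)| = |P_*(r,0)|`.
This common modulus is nonzero: otherwise a backward Grönwall argument for
`|∂ₛP(s,0)| ≤ |a(s)| |P(s,0)|` would force `P(0,0) = 0`. Hence `|P(r,λ)| = |P_*(r,λ)|`,
whereas the identity at `(λ,λ)` reads `|P(r,λ)|² - |P_*(r,λ)|² = -2 Im λ ∫₀^r |P(s,λ)|² ds ≠ 0`.
-/

open MeasureTheory Filter

noncomputable section

/-- A Krein system with coefficient `a ∈ L¹_loc([0,∞); ℂ)`, in integral form: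
`P` and `Ps` (= `P_*`) are locally absolutely continuous in `r` and satisfy
`∂P/∂r = iλP - conj(a)P_*`, `P(0,λ)=1` and `∂P_*/∂r = -aP`, `P_*(0,λ)=1`. -/
def IsKreinSystem (a : ℝ → ℂ) (P Ps : ℝ → ℂ → ℂ) : Prop :=
  MeasureTheory.LocallyIntegrableOn a (Set.Ici 0) ∧
  (∀ z : ℂ, ContinuousOn (fun r => P r z) (Set.Ici 0)) ∧
  (∀ z : ℂ, ContinuousOn (fun r => Ps r z) (Set.Ici 0)) ∧
  ∀ z : ℂ, ∀ r : ℝ, 0 ≤ r →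
    (P r z = 1 + ∫ s in (0:ℝ)..r,
        (Complex.I * z * P s z - (starRingEnd ℂ) (a s) * Ps s z)) ∧
    (Ps r z = 1 - ∫ s in (0:ℝ)..r, a s * P s z)

open Set Topology ComplexConjugate

section ProductRule

variable {𝕜 : Type*} [RCLike 𝕜] {a b : ℝ}

theorem IntervalIntegrable.conj {μ : Measure ℝ} {f : ℝ → 𝕜} (hf : IntervalIntegrable f μ a b) :
    IntervalIntegrable (fun x => conj (f x)) μ a b :=
  hf.mono_fun (RCLike.continuous_conj.comp_aestronglyMeasurable hf.def'.aestronglyMeasurable)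
    (Eventually.of_forall fun x => by simp)

theorem setIntegral_mul_primitive_add_setIntegral_primitive_mul {φ ψ : ℝ → 𝕜}
    (hφ : IntegrableOn φ (Ioc a b)) (hψ : IntegrableOn ψ (Ioc a b)) :
    (∫ s in Ioc a b, φ s * ∫ t in Ioc a s, ψ t) + ∫ t in Ioc a b, (∫ s in Ioc a t, φ s) * ψ t
      = (∫ s in Ioc a b, φ s) * ∫ t in Ioc a b, ψ t := by
  -- split the square `(a, b]²` along the diagonal and apply Fubini to each half
  set μ := volume.restrict (Ioc a b)
  set F : ℝ × ℝ → 𝕜 := fun p => φ p.1 * ψ p.2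
  set D := {p : ℝ × ℝ | p.2 ≤ p.1}
  have hD : MeasurableSet D := measurableSet_le measurable_snd measurable_fst
  have hDc : Dᶜ = {p : ℝ × ℝ | p.1 < p.2} := by ext; simp [D]
  have hF : Integrable F (μ.prod μ) := hφ.mul_prod hψ
  have lower : ∫ p, D.indicator F p ∂μ.prod μ = ∫ s in Ioc a b, φ s * ∫ t in Ioc a s, ψ t := by
    rw [integral_prod _ (hF.indicator hD)]
    refine setIntegral_congr_fun measurableSet_Ioc fun s hs => ?_
    have hIic : Iic s ∩ Ioc a b = Ioc a s := by
      ext t; simp only [mem_inter_iff, mem_Iic, mem_Ioc]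
      exact ⟨fun h => ⟨h.2.1, h.1⟩, fun h => ⟨h.2, h.1, h.2.trans hs.2⟩⟩
    change ∫ t, (Iic s).indicator (fun t => φ s * ψ t) t ∂μ = _
    rw [integral_indicator measurableSet_Iic, Measure.restrict_restrict measurableSet_Iic, hIic,
      integral_const_mul]
  have upper : ∫ p, Dᶜ.indicator F p ∂μ.prod μ = ∫ t in Ioc a b, (∫ s in Ioc a t, φ s) * ψ t := by
    rw [integral_prod_symm _ (hF.indicator hD.compl), hDc]
    refine setIntegral_congr_fun measurableSet_Ioc fun t ht => ?_
    have hIio : Iio t ∩ Ioc a b = Ioo a t := by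
      ext s; simp only [mem_inter_iff, mem_Iio, mem_Ioc, mem_Ioo]
      exact ⟨fun h => ⟨h.2.1, h.1⟩, fun h => ⟨h.2, h.1, h.2.le.trans ht.2⟩⟩
    change ∫ s, (Iio t).indicator (fun s => φ s * ψ t) s ∂μ = _
    rw [integral_indicator measurableSet_Iio, Measure.restrict_restrict measurableSet_Iio, hIio,
      ← integral_Ioc_eq_integral_Ioo, integral_mul_const]
  rw [← lower, ← upper, integral_indicator hD, integral_indicator hD.compl,
    integral_add_compl hD hF, integral_prod_mul]

theorem integral_mul_primitive_add_integral_primitive_mul {φ ψ : ℝ → 𝕜} (hab : a ≤ b)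
    (hφ : IntervalIntegrable φ volume a b) (hψ : IntervalIntegrable ψ volume a b) :
    (∫ s in a..b, φ s * ∫ t in a..s, ψ t) + ∫ t in a..b, (∫ s in a..t, φ s) * ψ t
      = (∫ s in a..b, φ s) * ∫ t in a..b, ψ t := by
  have hφ' := (intervalIntegrable_iff_integrableOn_Ioc_of_le hab).1 hφ
  have hψ' := (intervalIntegrable_iff_integrableOn_Ioc_of_le hab).1 hψ
  simp only [intervalIntegral.integral_of_le hab]
  rw [← setIntegral_mul_primitive_add_setIntegral_primitive_mul hφ' hψ']
  congr 1 <;> refine setIntegral_congr_fun measurableSet_Ioc fun s hs => ?_ <;>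
    simp only [intervalIntegral.integral_of_le hs.1.le]

theorem integral_mul_add_mul_eq_sub_of_primitive {φ ψ u v : ℝ → 𝕜} (hab : a ≤ b)
    (hφ : IntervalIntegrable φ volume a b) (hψ : IntervalIntegrable ψ volume a b)
    (hu : ∀ s ∈ Icc a b, u s = u a + ∫ t in a..s, φ t)
    (hv : ∀ s ∈ Icc a b, v s = v a + ∫ t in a..s, ψ t) :
    ∫ s in a..b, φ s * v s + u s * ψ s = u b * v b - u a * v a := by
  have hΦ : ContinuousOn (fun s => ∫ t in a..s, φ t) (uIcc a b) :=
    intervalIntegral.continuousOn_primitive_interval' hφ left_mem_uIcc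
  have hΨ : ContinuousOn (fun s => ∫ t in a..s, ψ t) (uIcc a b) :=
    intervalIntegral.continuousOn_primitive_interval' hψ left_mem_uIcc
  calc ∫ s in a..b, φ s * v s + u s * ψ s
      = ∫ s in a..b, (φ s * v a + u a * ψ s)
          + (φ s * (∫ t in a..s, ψ t) + (∫ t in a..s, φ t) * ψ s) := by
        refine intervalIntegral.integral_congr fun s hs => ?_
        rw [uIcc_of_le hab] at hs
        rw [hu s hs, hv s hs]
        ring
    _ = (∫ s in a..b, φ s) * v a + u a * (∫ s in a..b, ψ s)
          + (∫ s in a..b, φ s) * ∫ s in a..b, ψ s := by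
        rw [intervalIntegral.integral_add ((hφ.mul_const _).add (hψ.const_mul _))
            ((hφ.mul_continuousOn hΨ).add (hψ.continuousOn_mul hΦ)),
          intervalIntegral.integral_add (hφ.mul_const _) (hψ.const_mul _),
          intervalIntegral.integral_add (hφ.mul_continuousOn hΨ) (hψ.continuousOn_mul hΦ),
          intervalIntegral.integral_mul_const, intervalIntegral.integral_const_mul,
          integral_mul_primitive_add_integral_primitive_mul hab hφ hψ]
    _ = u b * v b - u a * v a := by
        rw [hu b ⟨hab, le_rfl⟩, hv b ⟨hab, le_rfl⟩]
        ring

end ProductRule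

section Gronwall

variable {h c : ℝ → ℝ} {a b : ℝ}

theorem eq_zero_of_le_integral_mul_of_integral_lt_one (hab : a ≤ b)
    (hh : ContinuousOn h (Icc a b)) (hh₀ : ∀ x ∈ Icc a b, 0 ≤ h x)
    (hc : IntegrableOn c (Icc a b)) (hc₀ : ∀ x, 0 ≤ c x) (hc₁ : ∫ s in a..b, c s < 1)
    (hle : ∀ x ∈ Icc a b, h x ≤ ∫ s in x..b, c s * h s) :
    ∀ x ∈ Icc a b, h x = 0 := by
  obtain ⟨m, hm, hmax⟩ := isCompact_Icc.exists_isMaxOn (nonempty_Icc.2 hab) hh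
  have hmb : uIcc m b ⊆ Icc a b := uIcc_subset_Icc hm ⟨hab, le_rfl⟩
  have hM : h m ≤ (∫ s in a..b, c s) * h m := calc
    h m ≤ ∫ s in m..b, c s * h s := hle m hm
    _ ≤ ∫ s in m..b, c s * h m :=
      intervalIntegral.integral_mono_on hm.2
        ((hc.mul_continuousOn hh isCompact_Icc).mono_set hmb).intervalIntegrable
        ((hc.mono_set hmb).intervalIntegrable.mul_const _)
        fun s hs => mul_le_mul_of_nonneg_left (hmax ⟨hm.1.trans hs.1, hs.2⟩) (hc₀ s)
    _ = (∫ s in m..b, c s) * h m := intervalIntegral.integral_mul_const _ _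
    _ ≤ (∫ s in a..b, c s) * h m := by
      gcongr
      · exact hh₀ m hm
      · exact intervalIntegral.integral_mono_interval hm.1 hm.2 le_rfl
          (Eventually.of_forall hc₀) (hc.mono_set (uIcc_of_le hab).subset).intervalIntegrable
  have hm₀ : h m ≤ 0 := by nlinarith [hh₀ m hm]
  exact fun x hx => le_antisymm ((hmax hx).trans hm₀) (hh₀ x hx)

theorem integral_mul_eq_zero_of_eq_zero_on_Ioc (hab : a ≤ b) (hzero : ∀ s ∈ Ioc a b, h s = 0) :
    ∫ s in a..b, c s * h s = 0 := by
  refine intervalIntegral.integral_zero_ae (Eventually.of_forall fun s hs => ?_)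
  rw [uIoc_of_le hab] at hs
  simp [hzero s hs]

theorem exists_lt_eq_zero_of_le_integral_mul
    (hh : ContinuousOn h (Icc a b)) (hh₀ : ∀ x ∈ Icc a b, 0 ≤ h x)
    (hc : IntegrableOn c (Icc a b)) (hc₀ : ∀ x, 0 ≤ c x)
    (hle : ∀ x ∈ Icc a b, h x ≤ ∫ s in x..b, c s * h s)
    {t : ℝ} (ht : t ∈ Ioc a b) (hzero : ∀ s ∈ Ioc t b, h s = 0) :
    ∃ t₁ ∈ Ico a t, ∀ s ∈ Ioc t₁ b, h s = 0 := by
  have hsmall : ∀ᶠ x in 𝓝[Ico a t] t, ∫ s in x..t, c s < 1 := by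
    have hcont := intervalIntegral.continuousOn_primitive_interval_left
      (hc.mono_set (uIcc_subset_Icc (left_mem_Icc.2 (ht.1.le.trans ht.2)) (Ioc_subset_Icc_self ht)))
    rw [uIcc_of_le ht.1.le] at hcont
    have h1 : ∀ᶠ y in 𝓝 (∫ s in t..t, c s), y < 1 := by
      simpa using eventually_lt_nhds one_pos
    exact ((hcont t ⟨ht.1.le, le_rfl⟩).mono Ico_subset_Icc_self).eventually h1
  have := right_nhdsWithin_Ico_neBot ht.1
  obtain ⟨t₁, ht₁c, ht₁⟩ := (hsmall.and self_mem_nhdsWithin).exists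
  have hsub : Icc t₁ t ⊆ Icc a b := Icc_subset_Icc ht₁.1 ht.2
  have hle' : ∀ x ∈ Icc t₁ t, h x ≤ ∫ s in x..t, c s * h s := fun x hx => by
    have hch := hc.mul_continuousOn hh isCompact_Icc
    rw [← add_zero (∫ s in x..t, c s * h s), ← integral_mul_eq_zero_of_eq_zero_on_Ioc ht.2 hzero,
      intervalIntegral.integral_add_adjacent_intervals
        (hch.mono_set (uIcc_subset_Icc (hsub hx) (hsub ⟨ht₁.2.le, le_rfl⟩))).intervalIntegrable
        (hch.mono_set (uIcc_subset_Icc (Ioc_subset_Icc_self ht)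
          ⟨ht.1.le.trans ht.2, le_rfl⟩)).intervalIntegrable]
    exact hle x (hsub hx)
  refine ⟨t₁, ht₁, fun s hs => (le_or_gt s t).elim (fun hst => ?_) fun hst => hzero s ⟨hst, hs.2⟩⟩
  exact eq_zero_of_le_integral_mul_of_integral_lt_one ht₁.2.le (hh.mono hsub)
    (fun x hx => hh₀ x (hsub hx)) (hc.mono_set hsub) hc₀ ht₁c hle' s ⟨hs.1.le, hst⟩

theorem eq_zero_of_le_integral_mul (hab : a ≤ b)
    (hh : ContinuousOn h (Icc a b)) (hh₀ : ∀ x ∈ Icc a b, 0 ≤ h x)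
    (hc : IntegrableOn c (Icc a b)) (hc₀ : ∀ x, 0 ≤ c x)
    (hle : ∀ x ∈ Icc a b, h x ≤ ∫ s in x..b, c s * h s) :
    ∀ x ∈ Icc a b, h x = 0 := by
  set S := {t | t ∈ Icc a b ∧ ∀ s ∈ Ioc t b, h s = 0}
  have hbS : b ∈ S := ⟨⟨hab, le_rfl⟩, fun s hs => absurd hs.2 hs.1.not_ge⟩
  have hSbdd : BddBelow S := ⟨a, fun t ht => ht.1.1⟩
  have ht₀ : sInf S ∈ Icc a b := ⟨le_csInf ⟨b, hbS⟩ fun t ht => ht.1.1, csInf_le hSbdd hbS⟩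
  have hzero : ∀ s ∈ Ioc (sInf S) b, h s = 0 := fun s hs => by
    obtain ⟨t, htS, hts⟩ := (csInf_lt_iff hSbdd ⟨b, hbS⟩).1 hs.1
    exact htS.2 s ⟨hts, hs.2⟩
  have ha : sInf S = a := by
    by_contra hne
    obtain ⟨t₁, ht₁, hzero₁⟩ := exists_lt_eq_zero_of_le_integral_mul hh hh₀ hc hc₀ hle
      ⟨ht₀.1.lt_of_ne (Ne.symm hne), ht₀.2⟩ hzero
    exact (csInf_le hSbdd ⟨⟨ht₁.1, ht₁.2.le.trans ht₀.2⟩, hzero₁⟩).not_gt ht₁.2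
  rw [ha] at hzero
  intro x hx
  rcases hx.1.eq_or_lt with rfl | hax
  · exact le_antisymm ((hle a hx).trans_eq (integral_mul_eq_zero_of_eq_zero_on_Ioc hab hzero))
      (hh₀ a hx)
  · exact hzero x ⟨hax, hx.2⟩

end Gronwall

namespace IsKreinSystem

open Complex

variable {a : ℝ → ℂ} {P Ps : ℝ → ℂ → ℂ} {r : ℝ}

theorem P_zero_apply (hK : IsKreinSystem a P Ps) (z : ℂ) : P 0 z = 1 := by
  simp [(hK.2.2.2 z 0 le_rfl).1]

theorem Ps_zero_apply (hK : IsKreinSystem a P Ps) (z : ℂ) : Ps 0 z = 1 := by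
  simp [(hK.2.2.2 z 0 le_rfl).2]

theorem integrableOn_coeff (hK : IsKreinSystem a P Ps) (r : ℝ) :
    IntegrableOn a (Icc 0 r) :=
  hK.1.integrableOn_compact_subset Icc_subset_Ici_self isCompact_Icc

theorem continuousOn_P (hK : IsKreinSystem a P Ps) (z : ℂ) (hr : 0 ≤ r) :
    ContinuousOn (fun s => P s z) (uIcc 0 r) :=
  (hK.2.1 z).mono (uIcc_of_le hr ▸ Icc_subset_Ici_self)

theorem continuousOn_Ps (hK : IsKreinSystem a P Ps) (z : ℂ) (hr : 0 ≤ r) :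
    ContinuousOn (fun s => Ps s z) (uIcc 0 r) :=
  (hK.2.2.1 z).mono (uIcc_of_le hr ▸ Icc_subset_Ici_self)

theorem intervalIntegrable_deriv_P (hK : IsKreinSystem a P Ps) (z : ℂ) (hr : 0 ≤ r) :
    IntervalIntegrable (fun s => I * z * P s z - conj (a s) * Ps s z) volume 0 r :=
  ((hK.continuousOn_P z hr).intervalIntegrable.const_mul _).sub
    (((hK.integrableOn_coeff r).mono_set (uIcc_of_le hr).subset).intervalIntegrable.conj
      |>.mul_continuousOn (hK.continuousOn_Ps z hr))

theorem intervalIntegrable_deriv_Ps (hK : IsKreinSystem a P Ps) (z : ℂ) (hr : 0 ≤ r) :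
    IntervalIntegrable (fun s => -(a s * P s z)) volume 0 r :=
  (((hK.integrableOn_coeff r).mono_set (uIcc_of_le hr).subset).intervalIntegrable
      |>.mul_continuousOn (hK.continuousOn_P z hr)).neg

theorem P_eq_primitive (hK : IsKreinSystem a P Ps) (z : ℂ) (hr : 0 ≤ r) :
    P r z = P 0 z + ∫ s in 0..r, I * z * P s z - conj (a s) * Ps s z := by
  rw [hK.P_zero_apply, (hK.2.2.2 z r hr).1]

theorem Ps_eq_primitive (hK : IsKreinSystem a P Ps) (z : ℂ) (hr : 0 ≤ r) :
    Ps r z = Ps 0 z + ∫ s in 0..r, -(a s * P s z) := by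
  rw [hK.Ps_zero_apply, (hK.2.2.2 z r hr).2, intervalIntegral.integral_neg, sub_eq_add_neg]

theorem conj_mul_sub_conj_mul (hK : IsKreinSystem a P Ps) (w z : ℂ) (hr : 0 ≤ r) :
    conj (P r w) * P r z - conj (Ps r w) * Ps r z
      = I * (z - conj w) * ∫ s in 0..r, conj (P s w) * P s z := by
  have conj_eq {f φ : ℝ → ℂ} (hf : ∀ s ∈ Icc 0 r, f s = f 0 + ∫ t in 0..s, φ t) :
      ∀ s ∈ Icc 0 r, conj (f s) = conj (f 0) + ∫ t in 0..s, conj (φ t) := fun s hs => by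
    rw [hf s hs, map_add, intervalIntegral.intervalIntegral_conj]
  have hP := integral_mul_add_mul_eq_sub_of_primitive hr
    (hK.intervalIntegrable_deriv_P w hr).conj (hK.intervalIntegrable_deriv_P z hr)
    (conj_eq fun s hs => hK.P_eq_primitive w hs.1) fun s hs => hK.P_eq_primitive z hs.1
  have hPs := integral_mul_add_mul_eq_sub_of_primitive hr
    (hK.intervalIntegrable_deriv_Ps w hr).conj (hK.intervalIntegrable_deriv_Ps z hr)
    (conj_eq fun s hs => hK.Ps_eq_primitive w hs.1) fun s hs => hK.Ps_eq_primitive z hs.1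
  simp only [hK.P_zero_apply, hK.Ps_zero_apply, map_one, mul_one] at hP hPs
  have hPw := continuous_conj.comp_continuousOn (hK.continuousOn_P w hr)
  have hPsw := continuous_conj.comp_continuousOn (hK.continuousOn_Ps w hr)
  calc conj (P r w) * P r z - conj (Ps r w) * Ps r z
      = (conj (P r w) * P r z - 1) - (conj (Ps r w) * Ps r z - 1) := by ring
    _ = ∫ s in 0..r, (conj (I * w * P s w - conj (a s) * Ps s w) * P s z
            + conj (P s w) * (I * z * P s z - conj (a s) * Ps s z))
          - (conj (-(a s * P s w)) * Ps s z + conj (Ps s w) * -(a s * P s z)) := by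
      rw [intervalIntegral.integral_sub, hP, hPs]
      · exact ((hK.intervalIntegrable_deriv_P w hr).conj.mul_continuousOn
          (hK.continuousOn_P z hr)).add
          ((hK.intervalIntegrable_deriv_P z hr).continuousOn_mul hPw)
      · exact ((hK.intervalIntegrable_deriv_Ps w hr).conj.mul_continuousOn
          (hK.continuousOn_Ps z hr)).add
          ((hK.intervalIntegrable_deriv_Ps z hr).continuousOn_mul hPsw)
    _ = I * (z - conj w) * ∫ s in 0..r, conj (P s w) * P s z := by
      rw [← intervalIntegral.integral_const_mul]
      refine intervalIntegral.integral_congr fun s _ => ?_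
      simp only [map_sub, map_mul, map_neg, conj_conj, conj_I]
      ring

theorem norm_sq_sub_norm_sq (hK : IsKreinSystem a P Ps) (z : ℂ) (hr : 0 ≤ r) :
    ‖P r z‖ ^ 2 - ‖Ps r z‖ ^ 2 = -2 * z.im * ∫ s in 0..r, ‖P s z‖ ^ 2 := by
  have h := hK.conj_mul_sub_conj_mul z z hr
  simp only [conj_mul', sub_conj] at h
  apply ofReal_injective
  push_cast
  rw [h, ← intervalIntegral.integral_ofReal]
  push_cast
  linear_combination (2 * z.im * ∫ s in 0..r, (‖P s z‖ : ℂ) ^ 2) * I_sq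

theorem norm_P_apply_zero_eq_norm_Ps_apply_zero (hK : IsKreinSystem a P Ps) (hr : 0 ≤ r) :
    ‖P r 0‖ = ‖Ps r 0‖ := by
  have h := hK.norm_sq_sub_norm_sq 0 hr
  rw [zero_im, mul_zero, zero_mul, sub_eq_zero] at h
  exact (pow_left_inj₀ (norm_nonneg _) (norm_nonneg _) two_ne_zero).1 h

theorem P_apply_zero_ne_zero (hK : IsKreinSystem a P Ps) (hr : 0 ≤ r) : P r 0 ≠ 0 := by
  intro hPr
  have hle : ∀ x ∈ Icc 0 r, ‖P x 0‖ ≤ ∫ s in x..r, ‖a s‖ * ‖P s 0‖ := by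
    intro x hx
    have hint := hK.intervalIntegrable_deriv_P 0 hr
    have hdiff : P x 0 = -∫ s in x..r, I * 0 * P s 0 - conj (a s) * Ps s 0 := by
      rw [← intervalIntegral.integral_interval_sub_left hint
        (hint.mono_set (uIcc_subset_uIcc_left (Icc_subset_uIcc hx)))]
      linear_combination hK.P_eq_primitive 0 hx.1 - hK.P_eq_primitive 0 hr + hPr
    calc ‖P x 0‖ = ‖∫ s in x..r, I * 0 * P s 0 - conj (a s) * Ps s 0‖ := by rw [hdiff, norm_neg]
      _ ≤ ∫ s in x..r, ‖I * 0 * P s 0 - conj (a s) * Ps s 0‖ :=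
        intervalIntegral.norm_integral_le_integral_norm hx.2
      _ = ∫ s in x..r, ‖a s‖ * ‖P s 0‖ := by
        refine intervalIntegral.integral_congr fun s hs => ?_
        rw [uIcc_of_le hx.2] at hs
        simp [hK.norm_P_apply_zero_eq_norm_Ps_apply_zero (hx.1.trans hs.1)]
  have h0 := eq_zero_of_le_integral_mul hr
    (((hK.continuousOn_P 0 hr).mono Icc_subset_uIcc).norm) (fun _ _ => norm_nonneg _)
    (hK.integrableOn_coeff r).norm (fun _ => norm_nonneg _) hle 0 ⟨le_rfl, hr⟩
  simp [hK.P_zero_apply] at h0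

theorem integral_norm_sq_P_pos (hK : IsKreinSystem a P Ps) (z : ℂ) (hr : 0 < r) :
    0 < ∫ s in 0..r, ‖P s z‖ ^ 2 :=
  intervalIntegral.integral_pos hr ((hK.continuousOn_P z hr.le).norm.pow 2 |>.mono Icc_subset_uIcc)
    (fun _ _ => by positivity) ⟨0, ⟨le_rfl, hr.le⟩, by simp [hK.P_zero_apply]⟩

end IsKreinSystem

/-- The function `λ ↦ K_r(0, λ) = ∫₀^r conj(P(s,0)) P(s,λ) ds` has no zeros outside the
real line. -/
theorem kreinK_ne_zero
    (a : ℝ → ℂ) (P Ps : ℝ → ℂ → ℂ)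
    (hK : IsKreinSystem a P Ps)
    (r : ℝ) (hr : 0 < r) :
    ∀ lam : ℂ, lam.im ≠ 0 →
      (∫ s in (0:ℝ)..r, (starRingEnd ℂ) (P s 0) * P s lam) ≠ 0 := by
  intro lam hlam hzero
  have hcross := hK.conj_mul_sub_conj_mul 0 lam hr.le
  rw [hzero, mul_zero, sub_eq_zero] at hcross
  have hnorm : ‖P r lam‖ = ‖Ps r lam‖ := by
    have := congrArg norm hcross
    simp only [norm_mul, RCLike.norm_conj,
      ← hK.norm_P_apply_zero_eq_norm_Ps_apply_zero hr.le] at this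
    exact mul_left_cancel₀ (norm_ne_zero_iff.2 (hK.P_apply_zero_ne_zero hr.le)) this
  have henergy := hK.norm_sq_sub_norm_sq lam hr.le
  rw [hnorm, sub_self] at henergy
  exact mul_ne_zero (mul_ne_zero (by norm_num) hlam) (hK.integral_norm_sq_P_pos lam hr).ne'
    henergy.symm
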